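/- Let Λ ⊆ ℂ be non-degenerate with properties (Alg) and (Aff): [K_Λ : ℚ] < ∞, and for every finite F ⊆ K_Λ some non-singular affine image of F lies in Λ. Then the set of m ≥ 3 for which Λ contains an affinely regular m-gon is finite. -/

import Mathlib

open Pointwise

/-- `ζ_m = e^{2πi/m}`, a primitive `m`-th root of unity in `ℂ`. -/
noncomputable def zeta (m : ℕ) : ℂ := Complex.exp (2 * Real.pi * Complex.I / m)

/-- `K_Λ = ℚ((Λ−Λ) ∪ conj(Λ−Λ))`, as a subfield of `ℂ`. -/
noncomputable def KL (Λ : Set ℂ) : IntermediateField ℚ ℂ :=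
  IntermediateField.adjoin ℚ ((Λ - Λ) ∪ (starRingEnd ℂ) '' (Λ - Λ))

/-- `Ψ : ℂ → ℂ` is a non-singular affine transformation of the plane. -/
def IsNSAffine (Ψ : ℂ → ℂ) : Prop :=
  ∃ (A : ℂ →ₗ[ℝ] ℂ) (t : ℂ), Function.Bijective A ∧ ∀ z : ℂ, Ψ z = A z + t

/-- There is an affinely regular `m`-gon with all vertices in `Λ`. -/
def HasAffRegularGon (m : ℕ) (Λ : Set ℂ) : Prop :=
  ∃ Ψ : ℂ → ℂ, IsNSAffine Ψ ∧ ∀ j : Fin m, Ψ ((zeta m) ^ (j : ℕ)) ∈ Λ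


/-!
If `Ψ` is a non-singular real-affine map and `ζ = ζ_m`, then `ζ ^ 2 + 1 = c ζ` with
`c = 2 cos (2π / m)` real, so the differences of consecutive vertices `w_j = Ψ (ζ ^ (j+1)) - Ψ (ζ ^ j)`
satisfy `w_2 + w_0 = c w_1`. Hence `c = (w_2 + w_0) / w_1 ∈ K_Λ`, so `ζ` has degree at most `2` over
`K_Λ`, and `φ m = [ℚ(ζ) : ℚ] ≤ 2 [K_Λ : ℚ]`. Finally `n ≤ 2 φ(n)²` for all `n`, so only finitely many
`m` have bounded totient.
-/

open Nat Polynomial IntermediateField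

namespace Nat

theorem prime_pow_le_totient_sq {p : ℕ} (hp : p.Prime) (hp2 : p ≠ 2) (k : ℕ) :
    p ^ k ≤ φ (p ^ k) ^ 2 := by
  rcases k with _ | k
  · simp
  have h3 : 3 ≤ p := by have := hp.two_le; omega
  have hp_le : p ≤ (p - 1) ^ 2 := by
    obtain ⟨q, rfl⟩ : ∃ q, p = q + 3 := ⟨p - 3, by omega⟩
    simp only [show q + 3 - 1 = q + 2 by omega]; nlinarith
  rw [totient_prime_pow_succ hp]
  calc p ^ (k + 1) = p ^ k * p := pow_succ p k
    _ ≤ (p ^ k) ^ 2 * (p - 1) ^ 2 :=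
      Nat.mul_le_mul (Nat.le_self_pow two_ne_zero _) hp_le
    _ = (p ^ k * (p - 1)) ^ 2 := (mul_pow _ _ _).symm

theorem le_totient_sq_of_odd {n : ℕ} (hn : Odd n) : n ≤ φ n ^ 2 := by
  induction n using Nat.recOnPosPrimePosCoprime with
  | zero => simp at hn
  | one => simp
  | prime_pow p k hp _ =>
    refine prime_pow_le_totient_sq hp ?_ k
    rintro rfl
    exact (Nat.not_odd_iff_even.mpr ((Nat.even_pow' (by omega)).mpr even_two)) hn
  | coprime a b _ _ hab iha ihb =>
    rw [Nat.odd_mul] at hn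
    rw [totient_mul hab, mul_pow]
    exact Nat.mul_le_mul (iha hn.1) (ihb hn.2)

theorem two_pow_le_two_mul_totient_sq (k : ℕ) : 2 ^ k ≤ 2 * φ (2 ^ k) ^ 2 := by
  rcases k with _ | k
  · simp
  rw [totient_prime_pow_succ prime_two]
  calc 2 ^ (k + 1) ≤ 2 ^ (2 * k + 1) := Nat.pow_le_pow_right two_pos (by omega)
    _ = 2 * (2 ^ k * (2 - 1)) ^ 2 := by ring

theorem le_two_mul_totient_sq (n : ℕ) : n ≤ 2 * φ n ^ 2 := by
  rcases eq_or_ne n 0 with rfl | hn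
  · simp
  obtain ⟨k, m, hm, rfl⟩ := Nat.exists_eq_two_pow_mul_odd hn
  rw [totient_mul ((coprime_two_left.mpr hm).pow_left k), mul_pow, ← mul_assoc]
  exact Nat.mul_le_mul (two_pow_le_two_mul_totient_sq k) (le_totient_sq_of_odd hm)

theorem finite_setOf_totient_le (N : ℕ) : {n | φ n ≤ N}.Finite :=
  (Set.finite_le_nat (2 * N ^ 2)).subset fun n hn =>
    (le_two_mul_totient_sq n).trans (Nat.mul_le_mul_left 2 (Nat.pow_le_pow_left hn 2))

end Nat

theorem natDegree_minpoly_le_finrank_mul_natDegree {F L : Type*} [Field F] [Field L] [Algebra F L]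
    (K : IntermediateField F L) [FiniteDimensional F K] {x : L} {p : K[X]} (hp : p.Monic)
    (hpx : aeval x p = 0) : (minpoly F x).natDegree ≤ Module.finrank F K * p.natDegree := by
  have hint : IsIntegral K x := ⟨p, hp, hpx⟩
  have : FiniteDimensional K K⟮x⟯ := adjoin.finiteDimensional hint
  have : FiniteDimensional F K⟮x⟯ := FiniteDimensional.trans F K K⟮x⟯
  have : Module.Free K K⟮x⟯ := Module.Free.of_divisionRing K K⟮x⟯
  have hdeg : Module.finrank K K⟮x⟯ ≤ p.natDegree := by
    rw [adjoin.finrank hint]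
    exact natDegree_le_natDegree (minpoly.degree_le_of_ne_zero K x hp.ne_zero hpx)
  calc (minpoly F x).natDegree
      = (minpoly F (AdjoinSimple.gen K x)).natDegree := by
        rw [← minpoly.algHom_eq ((K⟮x⟯).val.restrictScalars F) (K⟮x⟯).val.injective]; rfl
    _ ≤ Module.finrank F K⟮x⟯ := minpoly.natDegree_le _
    _ = Module.finrank F K * Module.finrank K K⟮x⟯ := (Module.finrank_mul_finrank F K K⟮x⟯).symm
    _ ≤ Module.finrank F K * p.natDegree := Nat.mul_le_mul_left _ hdeg

theorem Complex.sq_add_one_eq_two_mul_re_mul {z : ℂ} (hz : ‖z‖ = 1) :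
    z ^ 2 + 1 = (2 * z.re : ℝ) * z := by
  have hnorm : z * (starRingEnd ℂ) z = 1 := by
    rw [Complex.mul_conj, Complex.normSq_eq_norm_sq, hz, one_pow, Complex.ofReal_one]
  rw [← Complex.add_conj]
  linear_combination -hnorm

theorem LinearMap.map_pow_three_sub_add_map_sub_one (A : ℂ →ₗ[ℝ] ℂ) {z : ℂ} {c : ℝ}
    (hz : z ^ 2 + 1 = c * z) :
    A (z ^ 3) - A (z ^ 2) + (A z - A 1) = c * (A (z ^ 2) - A z) := by
  have hpoly : z ^ 3 - z ^ 2 + (z - 1) = c • (z ^ 2 - z) := by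
    rw [Complex.real_smul]
    linear_combination (z - 1) * hz
  calc A (z ^ 3) - A (z ^ 2) + (A z - A 1) = A (z ^ 3 - z ^ 2 + (z - 1)) := by
        simp only [map_add, map_sub]
    _ = c * (A (z ^ 2) - A z) := by rw [hpoly, map_smul, map_sub, Complex.real_smul]

theorem isPrimitiveRoot_zeta {m : ℕ} (hm : m ≠ 0) : IsPrimitiveRoot (zeta m) m :=
  Complex.isPrimitiveRoot_exp m hm

theorem norm_zeta (m : ℕ) : ‖zeta m‖ = 1 := by
  rw [zeta, ← Complex.norm_exp_ofReal_mul_I (2 * Real.pi / m)]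
  congr 2
  push_cast
  ring

theorem sub_mem_KL {Λ : Set ℂ} {x y : ℂ} (hx : x ∈ Λ) (hy : y ∈ Λ) : x - y ∈ KL Λ :=
  subset_adjoin ℚ _ (Or.inl (Set.sub_mem_sub hx hy))

theorem HasAffRegularGon.exists_forall_pow_mem {m : ℕ} {Λ : Set ℂ} (hm : m ≠ 0)
    (h : HasAffRegularGon m Λ) :
    ∃ (A : ℂ →ₗ[ℝ] ℂ) (t : ℂ), Function.Injective A ∧ ∀ k : ℕ, A (zeta m ^ k) + t ∈ Λ := by
  obtain ⟨Ψ, ⟨A, t, hA, hΨ⟩, hmem⟩ := h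
  refine ⟨A, t, hA.injective, fun k => ?_⟩
  rw [← hΨ, ← pow_mod_orderOf, ← (isPrimitiveRoot_zeta hm).eq_orderOf]
  exact hmem ⟨k % m, Nat.mod_lt k (Nat.pos_of_ne_zero hm)⟩

theorem HasAffRegularGon.two_mul_re_zeta_mem {m : ℕ} {Λ : Set ℂ} (hm : 2 ≤ m)
    (h : HasAffRegularGon m Λ) : ((2 * (zeta m).re : ℝ) : ℂ) ∈ KL Λ := by
  have hprim := isPrimitiveRoot_zeta (m := m) (by omega)
  obtain ⟨A, t, hA, hmem⟩ := h.exists_forall_pow_mem (by omega)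
  have hdiff (i j : ℕ) : A (zeta m ^ i) - A (zeta m ^ j) ∈ KL Λ := by
    simpa using sub_mem_KL (hmem i) (hmem j)
  have hsq : zeta m ^ 2 ≠ zeta m := by
    rw [sq, Ne, mul_eq_left₀ (hprim.ne_zero (by omega))]
    exact hprim.ne_one (by omega)
  have hden : A (zeta m ^ 2) - A (zeta m) ≠ 0 := sub_ne_zero.mpr (hA.ne hsq)
  have hrec := A.map_pow_three_sub_add_map_sub_one
    (Complex.sq_add_one_eq_two_mul_re_mul (norm_zeta m))
  rw [eq_div_of_mul_eq hden hrec.symm]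
  refine div_mem (add_mem (hdiff 3 2) ?_) ?_
  · simpa using hdiff 1 0
  · simpa using hdiff 2 1

theorem HasAffRegularGon.totient_le {m : ℕ} {Λ : Set ℂ} [FiniteDimensional ℚ (KL Λ)] (hm : 2 ≤ m)
    (h : HasAffRegularGon m Λ) : φ m ≤ 2 * Module.finrank ℚ (KL Λ) := by
  let c : KL Λ := ⟨_, h.two_mul_re_zeta_mem hm⟩
  have hroot : aeval (zeta m) (X ^ 2 - C c * X + 1) = 0 := by
    simp only [map_add, map_sub, map_mul, map_pow, aeval_X, aeval_C, map_one,
      IntermediateField.algebraMap_apply]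
    linear_combination Complex.sq_add_one_eq_two_mul_re_mul (norm_zeta m)
  have hdeg : (X ^ 2 - C c * X + 1 : (KL Λ)[X]).natDegree = 2 := by compute_degree!
  calc φ m = (minpoly ℚ (zeta m)).natDegree := by
        rw [← cyclotomic_eq_minpoly_rat (isPrimitiveRoot_zeta (by omega)) (by omega),
          natDegree_cyclotomic]
    _ ≤ Module.finrank ℚ (KL Λ) * 2 :=
        hdeg ▸ natDegree_minpoly_le_finrank_mul_natDegree _ (by monicity!) hroot
    _ = 2 * Module.finrank ℚ (KL Λ) := mul_comm _ _

theorem affRegularGon_finite_general (Λ : Set ℂ)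
    (halg : FiniteDimensional ℚ (KL Λ)) :
    {m : ℕ | 3 ≤ m ∧ HasAffRegularGon m Λ}.Finite := by
  have := halg
  exact (Nat.finite_setOf_totient_le (2 * Module.finrank ℚ (KL Λ))).subset
    fun m ⟨hm, hgon⟩ => hgon.totient_le (by omega)

/-- Let `Λ ⊆ ℂ` be non-degenerate with properties (Alg) (`[K_Λ : ℚ] < ∞`) and (Aff).
Then `Λ` contains affinely regular `m`-gons for only finitely many `m ≥ 3`. -/
theorem affRegularGon_finite (Λ : Set ℂ)
    (hnd : ∃ z ∈ KL Λ, z.im ≠ 0)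
    (halg : FiniteDimensional ℚ (KL Λ))
    (haff : ∀ F : Finset ℂ, (F : Set ℂ) ⊆ (KL Λ : Set ℂ) →
      ∃ Ψ : ℂ → ℂ, IsNSAffine Ψ ∧ Ψ '' (F : Set ℂ) ⊆ Λ) :
    {m : ℕ | 3 ≤ m ∧ HasAffRegularGon m Λ}.Finite :=
  affRegularGon_finite_general Λ halg
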